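/- For the monoid S = ⟨a, b | a² = 1, ab = b⟩, the relation ∼o is a congruence, and the quotient S/∼o is not right-cancellative (since ab = b = 1b but a ≁o 1). -/

import Mathlib

/-- The defining relations `a² = 1` and `ab = b` on the free monoid on two generators. -/
def baRel : FreeMonoid (Fin 2) → FreeMonoid (Fin 2) → Prop := fun x y =>
  (x = FreeMonoid.of 0 * FreeMonoid.of 0 ∧ y = 1) ∨
  (x = FreeMonoid.of 0 * FreeMonoid.of 1 ∧ y = FreeMonoid.of 1)

/-- The monoid `S = ⟨a, b | a² = 1, ab = b⟩`. -/
abbrev BaMonoid := (conGen baRel).Quotient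

/-- Otto conjugacy: `x ∼o y` iff `xg = gy` and `yh = hx` for some `g, h`. -/
def oRel {S : Type*} [Mul S] (x y : S) : Prop :=
  ∃ g h : S, x * g = g * y ∧ y * h = h * x

/-!
Every element of `S` is `bⁿ` or `bⁿa`. The number `n` of letters `b` is a monoid
homomorphism `S → ℕ`, and `s * a ≠ s` because `S` acts on the right of `Bool` with `a`
flipping and `b` resetting to `false`. Since `ℕ` is cancellative and commutative, `∼o`-related
elements have the same `n`; conversely `bⁿ ∼o bⁿa` for `n ≠ 0`,
while `1 ≁o a` since `1 * g = g * a` is impossible. Hence `∼o` identifies exactly the elements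
of equal nonzero `b`-length, which is a congruence because length is additive.
-/

theorem oRel_refl {S : Type*} [MulOneClass S] (x : S) : oRel x x :=
  ⟨1, 1, by rw [mul_one, one_mul], by rw [mul_one, one_mul]⟩

theorem oRel.symm {S : Type*} [Mul S] {x y : S} (h : oRel x y) : oRel y x :=
  let ⟨g, k, hg, hk⟩ := h
  ⟨k, g, hk, hg⟩

theorem oRel.eq {S : Type*} [CommMagma S] [IsRightCancelMul S] {x y : S} (h : oRel x y) :
    x = y :=
  let ⟨g, _, hg, _⟩ := h
  mul_right_cancel (hg.trans (mul_comm g y))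

theorem oRel.map {S T F : Type*} [Mul S] [Mul T] [FunLike F S T] [MulHomClass F S T] (f : F)
    {x y : S} (h : oRel x y) : oRel (f x) (f y) :=
  let ⟨g, k, hg, hk⟩ := h
  ⟨f g, f k, by rw [← map_mul, ← map_mul, hg], by rw [← map_mul, ← map_mul, hk]⟩

def weightCon {M N : Type*} [Monoid M] [CommMonoid N] [Subsingleton Nˣ] (w : M →* N) :
    Con M where
  r x y := x = y ∨ (w x = w y ∧ w x ≠ 1)
  iseqv :=
    { refl _ := .inl rfl
      symm := by
        rintro x y (rfl | ⟨hw, hne⟩)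
        exacts [.inl rfl, .inr ⟨hw.symm, hw ▸ hne⟩]
      trans := by
        rintro x y z hxy (rfl | ⟨hyz, hne⟩)
        · exact hxy
        rcases hxy with rfl | ⟨hxy, hne'⟩
        exacts [.inr ⟨hyz, hne⟩, .inr ⟨hxy.trans hyz, hne'⟩] }
  mul' := by
    intro x y u v hxy huv
    have weight_eq {s t : M} : s = t ∨ (w s = w t ∧ w s ≠ 1) → w s = w t := by
      rintro (rfl | ⟨h, -⟩)
      exacts [rfl, h]
    by_cases h1 : w (x * u) = 1
    · rw [map_mul, mul_eq_one] at h1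
      obtain rfl : x = y := hxy.resolve_right (fun h => h.2 h1.1)
      obtain rfl : u = v := huv.resolve_right (fun h => h.2 h1.2)
      exact .inl rfl
    · exact .inr ⟨by rw [map_mul, map_mul, weight_eq hxy, weight_eq huv], h1⟩

namespace BaMonoid

def a : BaMonoid := ((FreeMonoid.of 0 : FreeMonoid (Fin 2)) : BaMonoid)

def b : BaMonoid := ((FreeMonoid.of 1 : FreeMonoid (Fin 2)) : BaMonoid)

theorem a_mul_a : a * a = 1 :=
  (Con.eq _).mpr (.of _ _ (.inl ⟨rfl, rfl⟩))

theorem a_mul_b : a * b = b :=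
  (Con.eq _).mpr (.of _ _ (.inr ⟨rfl, rfl⟩))

theorem a_mul_b_pow {n : ℕ} (hn : n ≠ 0) : a * b ^ n = b ^ n := by
  obtain ⟨k, rfl⟩ := Nat.exists_eq_succ_of_ne_zero hn
  rw [pow_succ', ← mul_assoc, a_mul_b]

theorem exists_eq_b_pow_or_eq_b_pow_mul_a (s : BaMonoid) : ∃ n, s = b ^ n ∨ s = b ^ n * a := by
  induction s using Con.induction_on with
  | H w =>
    induction w using FreeMonoid.inductionOn' with
    | one => exact ⟨0, .inl (pow_zero b).symm⟩
    | of_mul i w ih =>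
      obtain ⟨n, hs⟩ := ih
      rw [Con.coe_mul]
      fin_cases i
      · change ∃ m, a * _ = b ^ m ∨ a * _ = b ^ m * a
        rcases eq_or_ne n 0 with rfl | hn
        · rcases hs with hs | hs <;> rw [hs, pow_zero]
          exacts [⟨0, .inr (by rw [pow_zero, mul_one, one_mul])⟩,
            ⟨0, .inl (by rw [one_mul, a_mul_a, pow_zero])⟩]
        · refine ⟨n, ?_⟩
          rcases hs with hs | hs <;> rw [hs]
          exacts [.inl (a_mul_b_pow hn), .inr (by rw [← mul_assoc, a_mul_b_pow hn])]
      · change ∃ m, b * _ = b ^ m ∨ b * _ = b ^ m * a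
        refine ⟨n + 1, ?_⟩
        rcases hs with hs | hs <;> rw [hs, pow_succ']
        exacts [.inl rfl, .inr (mul_assoc _ _ _).symm]

section lift

variable {M : Type*} [Monoid M] (α β : M) (hα : α * α = 1) (hαβ : α * β = β)

def lift : BaMonoid →* M :=
  (conGen baRel).lift (FreeMonoid.lift ![α, β]) <| Con.conGen_le.2 <| by
    rintro x y (⟨rfl, rfl⟩ | ⟨rfl, rfl⟩) <;> simpa [Con.ker_rel]

@[simp]
theorem lift_a : lift α β hα hαβ a = α := rfl

@[simp]
theorem lift_b : lift α β hα hαβ b = β := rfl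

end lift

def bLength : BaMonoid →* Multiplicative ℕ :=
  lift 1 (.ofAdd 1) (one_mul 1) (one_mul _)

theorem bLength_b_pow (n : ℕ) : bLength (b ^ n) = .ofAdd n := by
  simp [bLength, ← ofAdd_nsmul]

theorem bLength_b_pow_mul_a (n : ℕ) : bLength (b ^ n * a) = .ofAdd n := by
  simp [bLength, ← ofAdd_nsmul]

def trailingA : BaMonoid →* (Function.End Bool)ᵐᵒᵖ :=
  lift (.op not) (.op fun _ => false) (MulOpposite.unop_injective (funext Bool.not_not)) rfl

theorem mul_a_ne (s : BaMonoid) : s * a ≠ s := by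
  intro h
  have flip : (trailingA (s * a)).unop false = !(trailingA s).unop false := by
    rw [map_mul]; rfl
  exact Bool.not_ne_self _ (flip.symm.trans (congrArg (fun t => (trailingA t).unop false) h))

theorem not_oRel_one_a : ¬ oRel 1 a := fun ⟨g, _, hg, _⟩ => mul_a_ne g (hg.symm.trans (one_mul g))

theorem oRel_b_pow_b_pow_mul_a {n : ℕ} (hn : n ≠ 0) : oRel (b ^ n) (b ^ n * a) :=
  ⟨a, b, by rw [← mul_assoc, a_mul_b_pow hn], by rw [mul_assoc, a_mul_b, ← pow_succ, ← pow_succ']⟩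

theorem eq_one_or_eq_a_of_bLength_eq_one {s : BaMonoid} (hs : bLength s = 1) : s = 1 ∨ s = a := by
  obtain ⟨n, rfl | rfl⟩ := exists_eq_b_pow_or_eq_b_pow_mul_a s
  · rw [bLength_b_pow, ofAdd_eq_one] at hs
    exact .inl (by rw [hs, pow_zero])
  · rw [bLength_b_pow_mul_a, ofAdd_eq_one] at hs
    exact .inr (by rw [hs, pow_zero, one_mul])

theorem oRel_iff (x y : BaMonoid) : oRel x y ↔ weightCon bLength x y := by
  constructor
  · intro h
    have hw : bLength x = bLength y := (h.map bLength).eq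
    by_cases h1 : bLength x = 1
    · rcases eq_one_or_eq_a_of_bLength_eq_one h1 with rfl | rfl <;>
        rcases eq_one_or_eq_a_of_bLength_eq_one (hw ▸ h1) with rfl | rfl
      exacts [.inl rfl, (not_oRel_one_a h).elim, (not_oRel_one_a h.symm).elim, .inl rfl]
    · exact .inr ⟨hw, h1⟩
  · rintro (rfl | ⟨hw, hne⟩)
    · exact oRel_refl x
    obtain ⟨n, rfl | rfl⟩ := exists_eq_b_pow_or_eq_b_pow_mul_a x <;>
      obtain ⟨m, rfl | rfl⟩ := exists_eq_b_pow_or_eq_b_pow_mul_a y <;>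
      simp only [bLength_b_pow, bLength_b_pow_mul_a, ne_eq, ofAdd_eq_one,
        EmbeddingLike.apply_eq_iff_eq] at hw hne <;>
      subst hw
    exacts [oRel_refl _, oRel_b_pow_b_pow_mul_a hne, (oRel_b_pow_b_pow_mul_a hne).symm,
      oRel_refl _]

end BaMonoid

/-- For `S = ⟨a, b | a² = 1, ab = b⟩`, `∼o` is a congruence, and the quotient `S/∼o`
is not right-cancellative: there are `x, y, z` with `xz ∼o yz` but `x ≁o y`. -/
theorem stmt_10 :
    Equivalence (oRel (S := BaMonoid)) ∧
    (∀ a b c d : BaMonoid, oRel a b → oRel c d → oRel (a * c) (b * d)) ∧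
    (∃ x y z : BaMonoid, oRel (x * z) (y * z) ∧ ¬ oRel x y) := by
  have h : oRel (S := BaMonoid) = weightCon BaMonoid.bLength :=
    funext₂ fun x y => propext (BaMonoid.oRel_iff x y)
  refine ⟨h ▸ (weightCon _).iseqv, fun _ _ _ _ => h ▸ (weightCon _).mul,
    BaMonoid.a, 1, BaMonoid.b, ?_, fun h => BaMonoid.not_oRel_one_a h.symm⟩
  rw [BaMonoid.a_mul_b, one_mul]
  exact oRel_refl BaMonoid.b
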